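/- arXiv:2307.12414 — 2 statements merged into one kernel-verified Lean document; each statement's English description precedes it below -/
import Mathlib

section
/- Let P have eigenvalues λ₁ > λ₂ > 0 and let κ, κ⁰ ∈ S_ℂ be unit vectors in ℂ^N with N ≥ 2. Then there exists a 2×2 real symmetric matrix S, depending only on κ, κ⁰ and P, all of whose eigenvalues are ≥ λ₂, such that for every φ ∈ ℂ, ρ(φκ⁰, [κ]) = (η̃² − η̃⁴/4) · vec(φ)ᵀ S vec(φ), where η̃ := d([κ],[κ⁰]). In particular ρ(φκ⁰,[κ]) ≥ (η̃² − η̃⁴/4)·λ₂·|φ|² for all φ ∈ ℂ. -/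
open scoped BigOperators Matrix ComplexOrder
open MeasureTheory Filter Matrix

noncomputable section

/-- Complex `N`-vector with the Euclidean norm. -/
abbrev CVec (N : ℕ) := EuclideanSpace ℂ (Fin N)

/-- `vec(z) = (Re z, Im z)ᵀ ∈ ℝ²`. -/
def vecC (z : ℂ) : Fin 2 → ℝ := ![z.re, z.im]

/-- `M(z)` : real `2×2` matrix representation of `z ∈ ℂ`. -/
def MC (z : ℂ) : Matrix (Fin 2) (Fin 2) ℝ := !![z.re, -z.im; z.im, z.re]

/-- `z ⋄_A w = Σ_ν M(z_ν)ᵀ A M(w_ν)`. -/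
def diaA {N : ℕ} (A : Matrix (Fin 2) (Fin 2) ℝ) (z w : CVec N) : Matrix (Fin 2) (Fin 2) ℝ :=
  ∑ ν, (MC (z ν))ᵀ * A * MC (w ν)

/-- `z •_A w = Σ_ν M(z_ν)ᵀ A vec(w_ν)`. -/
def bulA {N : ℕ} (A : Matrix (Fin 2) (Fin 2) ℝ) (z w : CVec N) : Fin 2 → ℝ :=
  ∑ ν, ((MC (z ν))ᵀ * A) *ᵥ vecC (w ν)

/-- `⟨z,w⟩_A = Σ_ν vec(z_ν)ᵀ A vec(w_ν)`. -/
def iprA {N : ℕ} (A : Matrix (Fin 2) (Fin 2) ℝ) (z w : CVec N) : ℝ :=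
  ∑ ν, vecC (z ν) ⬝ᵥ (A *ᵥ vecC (w ν))

/-- Mahalanobis distance `d_A(z,w) = ‖z-w‖_A`. -/
def dMah {N : ℕ} (A : Matrix (Fin 2) (Fin 2) ℝ) (z w : CVec N) : ℝ :=
  Real.sqrt (iprA A (z - w) (z - w))

/-- `φ̂(κ,P,Y)`, the complex number with `vec(φ̂) = (κ ⋄_P κ)⁻¹ (κ •_P Y)`. -/
def phiHat {N : ℕ} (κ : CVec N) (P : Matrix (Fin 2) (Fin 2) ℝ) (Y : CVec N) : ℂ :=
  ((((diaA P κ κ)⁻¹ *ᵥ bulA P κ Y) 0 : ℝ) : ℂ) +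
    ((((diaA P κ κ)⁻¹ *ᵥ bulA P κ Y) 1 : ℝ) : ℂ) * Complex.I

/-- the loss `ρ(Y,[κ]) = d_P(Y, φ̂(κ,P,Y)κ)²`. -/
def rhoD {N : ℕ} (P : Matrix (Fin 2) (Fin 2) ℝ) (Y κ : CVec N) : ℝ :=
  dMah P Y (phiHat κ P Y • κ) ^ 2

/-- projective distance `d([κ],[κ']) = min_λ ‖κ - e^{iλ} κ'‖`. -/
def pdist {N : ℕ} (κ κ' : CVec N) : ℝ :=
  ⨅ t : ℝ, ‖κ - Complex.exp (t * Complex.I) • κ'‖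

/-- Euclidean norm on `ℝ²`. -/
def nrm2 (v : Fin 2 → ℝ) : ℝ := Real.sqrt (v 0 ^ 2 + v 1 ^ 2)

/-- Frobenius norm of a real `2×2` matrix. -/
def frob (A : Matrix (Fin 2) (Fin 2) ℝ) : ℝ := Real.sqrt (∑ i, ∑ j, A i j ^ 2)

lemma MC_transpose (z : ℂ) : (MC z)ᵀ = !![z.re, z.im; -z.im, z.re] := by
  ext i j; fin_cases i <;> fin_cases j <;> simp [MC]

lemma sum_mulVec' {ι : Type*} (s : Finset ι) (A : ι → Matrix (Fin 2) (Fin 2) ℝ) (x : Fin 2 → ℝ) :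
    (∑ i ∈ s, A i) *ᵥ x = ∑ i ∈ s, A i *ᵥ x := by
  funext j
  simp only [Matrix.mulVec, dotProduct, Matrix.sum_apply, Finset.sum_mul, Finset.sum_apply]
  exact Finset.sum_comm

lemma dot_sum' {ι : Type*} (s : Finset ι) (v : Fin 2 → ℝ) (f : ι → (Fin 2 → ℝ)) :
    v ⬝ᵥ (∑ i ∈ s, f i) = ∑ i ∈ s, v ⬝ᵥ f i := by
  simp [dotProduct, Finset.sum_apply, Finset.mul_sum]
  rw [← Finset.sum_add_distrib]

lemma iprA_smul_smul {N : ℕ} (P : Matrix (Fin 2) (Fin 2) ℝ) (ψ χ : ℂ) (z w : CVec N) :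
    iprA P (ψ • z) (χ • w) = vecC ψ ⬝ᵥ diaA P z w *ᵥ vecC χ := by
  unfold iprA diaA
  rw [sum_mulVec', dot_sum']
  refine Finset.sum_congr rfl fun ν _ => ?_
  have h1 : (ψ • z) ν = ψ * z ν := rfl
  have h2 : (χ • w) ν = χ * w ν := rfl
  rw [h1, h2, MC_transpose]
  simp [vecC, MC, Matrix.mulVec, Matrix.vecMul, Matrix.mul_apply, dotProduct, Fin.sum_univ_two,
    Complex.mul_re, Complex.mul_im]
  ring

lemma bulA_smul {N : ℕ} (P : Matrix (Fin 2) (Fin 2) ℝ) (χ : ℂ) (κ w : CVec N) :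
    bulA P κ (χ • w) = diaA P κ w *ᵥ vecC χ := by
  unfold bulA diaA
  rw [sum_mulVec']
  refine Finset.sum_congr rfl fun ν _ => ?_
  have h2 : (χ • w) ν = χ * w ν := rfl
  rw [h2, MC_transpose]
  funext i
  fin_cases i <;>
  · simp [vecC, MC, Matrix.mulVec, Matrix.vecMul, Matrix.mul_apply, dotProduct, Fin.sum_univ_two,
      Complex.mul_re, Complex.mul_im]
    ring

lemma iprA_sub_sub {N : ℕ} (P : Matrix (Fin 2) (Fin 2) ℝ) (a b : CVec N) :
    iprA P (a - b) (a - b) = iprA P a a - iprA P a b - iprA P b a + iprA P b b := by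
  unfold iprA
  rw [← Finset.sum_sub_distrib, ← Finset.sum_sub_distrib, ← Finset.sum_add_distrib]
  refine Finset.sum_congr rfl fun ν _ => ?_
  have h1 : (a - b) ν = a ν - b ν := rfl
  rw [h1]
  simp [vecC, Matrix.mulVec, dotProduct, Fin.sum_univ_two, Complex.sub_re, Complex.sub_im]
  ring

lemma diaA_transpose {N : ℕ} (P : Matrix (Fin 2) (Fin 2) ℝ) (hP : Pᵀ = P) (z w : CVec N) :
    (diaA P z w)ᵀ = diaA P w z := by
  unfold diaA
  rw [Matrix.transpose_sum]
  refine Finset.sum_congr rfl fun ν _ => ?_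
  rw [Matrix.transpose_mul, Matrix.transpose_mul, Matrix.transpose_transpose, hP, Matrix.mul_assoc]

lemma quad_lb (P R : Matrix (Fin 2) (Fin 2) ℝ) (l1 l2 : ℝ)
    (hR : R * Rᵀ = 1) (hPspec : P = R * Matrix.diagonal ![l1, l2] * Rᵀ)
    (hl12 : l2 ≤ l1) (u : Fin 2 → ℝ) :
    l2 * (u 0 ^ 2 + u 1 ^ 2) ≤ u ⬝ᵥ P *ᵥ u := by
  have e00 : R 0 0 * R 0 0 + R 0 1 * R 0 1 = 1 := by
    have := congrFun (congrFun hR 0) 0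
    simpa [Matrix.mul_apply, Fin.sum_univ_two, Matrix.one_apply] using this
  have e01 : R 0 0 * R 1 0 + R 0 1 * R 1 1 = 0 := by
    have := congrFun (congrFun hR 0) 1
    simpa [Matrix.mul_apply, Fin.sum_univ_two, Matrix.one_apply] using this
  have e11 : R 1 0 * R 1 0 + R 1 1 * R 1 1 = 1 := by
    have := congrFun (congrFun hR 1) 1
    simpa [Matrix.mul_apply, Fin.sum_univ_two, Matrix.one_apply] using this
  subst hPspec
  have key : u ⬝ᵥ (R * Matrix.diagonal ![l1, l2] * Rᵀ) *ᵥ u - l2 * (u 0 ^ 2 + u 1 ^ 2)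
      = (l1 - l2) * (R 0 0 * u 0 + R 1 0 * u 1) ^ 2 := by
    simp [Matrix.mul_apply, Matrix.mulVec, Matrix.vecMul, dotProduct, Fin.sum_univ_two,
      Matrix.diagonal, Matrix.one_apply]
    linear_combination (l2 * u 0 ^ 2) * e00 + (2 * l2 * u 0 * u 1) * e01 + (l2 * u 1 ^ 2) * e11
  nlinarith [key, sq_nonneg (R 0 0 * u 0 + R 1 0 * u 1)]

lemma pdist_eq {N : ℕ} (κ κ0 : CVec N) (hκ : ‖κ‖ = 1) (hκ0 : ‖κ0‖ = 1) :
    pdist κ κ0 = Real.sqrt (2 - 2 * ‖(inner ℂ κ κ0 : ℂ)‖) := by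
  set c : ℂ := (inner ℂ κ κ0 : ℂ) with hc
  have hft : ∀ t : ℝ, ‖κ - Complex.exp (t * Complex.I) • κ0‖
      = Real.sqrt (2 - 2 * (Complex.exp (t * Complex.I) * c).re) := by
    intro t
    rw [← Real.sqrt_sq (norm_nonneg (κ - Complex.exp (t * Complex.I) • κ0))]
    congr 1
    rw [norm_sub_sq (𝕜 := ℂ), inner_smul_right, hκ]
    have : ‖Complex.exp (↑t * Complex.I) • κ0‖ = 1 := by
      rw [norm_smul, hκ0, Complex.norm_exp_ofReal_mul_I]; ring
    rw [this, ← hc]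
    simp [Complex.mul_re]
    ring
  have hbdd : BddBelow (Set.range fun t : ℝ => ‖κ - Complex.exp (t * Complex.I) • κ0‖) :=
    ⟨0, by rintro x ⟨t, rfl⟩; exact norm_nonneg _⟩
  refine le_antisymm ?_ ?_
  · have h1 : pdist κ κ0 ≤ ‖κ - Complex.exp ((-c.arg : ℝ) * Complex.I) • κ0‖ :=
      ciInf_le hbdd (-c.arg)
    rw [hft] at h1
    have h2 : (Complex.exp ((-c.arg : ℝ) * Complex.I) * c).re = ‖c‖ := by
      rcases eq_or_ne c 0 with h0 | h0
      · simp [h0]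
      · have hre : (Complex.exp ((-c.arg : ℝ) * Complex.I) * c).re
            = Real.cos c.arg * c.re + Real.sin c.arg * c.im := by
          rw [Complex.exp_mul_I]
          push_cast
          simp [Complex.add_re, Complex.mul_re, Complex.mul_im, Complex.cos_ofReal_re,
            Complex.sin_ofReal_re, Complex.cos_ofReal_im, Complex.sin_ofReal_im]
        rw [hre, Complex.cos_arg h0, Complex.sin_arg c]
        have habsne : ‖c‖ ≠ 0 := by
          simpa using h0
        have hsq : c.re ^ 2 + c.im ^ 2 = ‖c‖ ^ 2 := by
          rw [Complex.sq_norm, Complex.normSq_apply]; ring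
        field_simp
        nlinarith [hsq]
    rw [h2] at h1
    exact h1
  · refine le_ciInf fun t => ?_
    rw [hft]
    apply Real.sqrt_le_sqrt
    have : (Complex.exp (↑t * Complex.I) * c).re ≤ ‖c‖ := by
      calc (Complex.exp (↑t * Complex.I) * c).re
          ≤ ‖Complex.exp (↑t * Complex.I) * c‖ := Complex.re_le_norm _
        _ = ‖c‖ := by
            rw [norm_mul, Complex.norm_exp_ofReal_mul_I, one_mul]
    linarith

/-- there is a real symmetric matrix `S` (depending only on `κ, κ⁰, P`) with all
eigenvalues `≥ λ₂` such that `ρ(φκ⁰,[κ]) = (η̃² − η̃⁴/4)·vec(φ)ᵀ S vec(φ)` for all `φ ∈ ℂ`,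
where `η̃ = d([κ],[κ⁰])`; in particular `ρ(φκ⁰,[κ]) ≥ (η̃² − η̃⁴/4)·λ₂·|φ|²`. -/
theorem rho_of_signal_decomposition {N : ℕ} (hN : 2 ≤ N)
    (P R : Matrix (Fin 2) (Fin 2) ℝ) (l1 l2 : ℝ)
    (hR : R * Rᵀ = 1) (hPspec : P = R * Matrix.diagonal ![l1, l2] * Rᵀ)
    (hl2 : 0 < l2) (hl12 : l2 < l1)
    (κ κ0 : CVec N) (hκ : ‖κ‖ = 1) (hκ0 : ‖κ0‖ = 1) :
    ∃ S : Matrix (Fin 2) (Fin 2) ℝ, S.IsSymm ∧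
      (S - l2 • (1 : Matrix (Fin 2) (Fin 2) ℝ)).PosSemidef ∧
      (∀ φ : ℂ, rhoD P (φ • κ0) κ =
        (pdist κ κ0 ^ 2 - pdist κ κ0 ^ 4 / 4) * (vecC φ ⬝ᵥ S *ᵥ vecC φ)) ∧
      (∀ φ : ℂ,
        (pdist κ κ0 ^ 2 - pdist κ κ0 ^ 4 / 4) * l2 * ‖φ‖ ^ 2 ≤
          rhoD P (φ • κ0) κ) := by
  have hPlb : ∀ u : Fin 2 → ℝ, l2 * (u 0 ^ 2 + u 1 ^ 2) ≤ u ⬝ᵥ P *ᵥ u :=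
    quad_lb P R l1 l2 hR hPspec hl12.le
  have hPsymm : Pᵀ = P := by
    rw [hPspec, Matrix.transpose_mul, Matrix.transpose_mul, Matrix.transpose_transpose,
      Matrix.diagonal_transpose, Matrix.mul_assoc]
  -- basic sums
  have hA : ∑ ν, ((κ ν).re ^ 2 + (κ ν).im ^ 2) = 1 := by
    have h := hκ
    rw [EuclideanSpace.norm_eq] at h
    rw [← Real.sqrt_eq_one.mp h]
    exact Finset.sum_congr rfl fun ν _ => by
      rw [Complex.sq_norm, Complex.normSq_apply]; ring
  have hB : ∑ ν, ((κ0 ν).re ^ 2 + (κ0 ν).im ^ 2) = 1 := by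
    have h := hκ0
    rw [EuclideanSpace.norm_eq] at h
    rw [← Real.sqrt_eq_one.mp h]
    exact Finset.sum_congr rfl fun ν _ => by
      rw [Complex.sq_norm, Complex.normSq_apply]; ring
  set cc : ℂ := (inner ℂ κ κ0 : ℂ) with hccdef
  have hccsum : cc = ∑ ν, (starRingEnd ℂ) (κ ν) * κ0 ν := by
    rw [hccdef, PiLp.inner_apply]
    exact Finset.sum_congr rfl fun ν _ => by rw [RCLike.inner_apply, mul_comm]
  have hcre : ∑ ν, ((κ ν).re * (κ0 ν).re + (κ ν).im * (κ0 ν).im) = cc.re := by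
    rw [hccsum, Complex.re_sum]
    exact Finset.sum_congr rfl fun ν _ => by
      simp [Complex.mul_re]
  have hcim : ∑ ν, ((κ ν).re * (κ0 ν).im - (κ ν).im * (κ0 ν).re) = cc.im := by
    rw [hccsum, Complex.im_sum]
    exact Finset.sum_congr rfl fun ν _ => by
      simp [Complex.mul_im]
      ring
  have habs : ‖cc‖ ≤ 1 := by
    have := norm_inner_le_norm (𝕜 := ℂ) κ κ0
    rw [hκ, hκ0] at this
    simpa [← hccdef] using this
  have habs2 : ‖cc‖ ^ 2 = cc.re ^ 2 + cc.im ^ 2 := by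
    rw [Complex.sq_norm, Complex.normSq_apply]; ring
  -- nonnegativity of the P-inner product
  have hipr_nonneg : ∀ z : CVec N, 0 ≤ iprA P z z := by
    intro z
    refine Finset.sum_nonneg fun ν _ => le_trans ?_ (hPlb (vecC (z ν)))
    positivity
  have hrhoD_eq : ∀ Y : CVec N, rhoD P Y κ = iprA P (Y - phiHat κ P Y • κ) (Y - phiHat κ P Y • κ) := by
    intro Y
    rw [rhoD, dMah, Real.sq_sqrt (hipr_nonneg _)]
  -- the matrices
  set G := diaA P κ κ with hGdef
  set B := diaA P κ κ0 with hBdef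
  set B0 := diaA P κ0 κ0 with hB0def
  have hGsymm : Gᵀ = G := diaA_transpose P hPsymm κ κ
  have hB0symm : B0ᵀ = B0 := diaA_transpose P hPsymm κ0 κ0
  have hGlb : ∀ v : Fin 2 → ℝ, l2 * (v 0 ^ 2 + v 1 ^ 2) ≤ v ⬝ᵥ G *ᵥ v := by
    intro v
    have expand : v ⬝ᵥ G *ᵥ v = ∑ ν, (MC (κ ν) *ᵥ v) ⬝ᵥ P *ᵥ (MC (κ ν) *ᵥ v) := by
      rw [hGdef]
      unfold diaA
      rw [sum_mulVec', dot_sum']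
      refine Finset.sum_congr rfl fun ν _ => ?_
      rw [← Matrix.mulVec_mulVec, ← Matrix.mulVec_mulVec,
        Matrix.dotProduct_mulVec v (MC (κ ν))ᵀ, Matrix.vecMul_transpose]
    rw [expand]
    have step : ∀ ν : Fin N, l2 * ((κ ν).re ^ 2 + (κ ν).im ^ 2) * (v 0 ^ 2 + v 1 ^ 2)
        ≤ (MC (κ ν) *ᵥ v) ⬝ᵥ P *ᵥ (MC (κ ν) *ᵥ v) := by
      intro ν
      have h1 := hPlb (MC (κ ν) *ᵥ v)
      have h2 : (MC (κ ν) *ᵥ v) 0 ^ 2 + (MC (κ ν) *ᵥ v) 1 ^ 2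
          = ((κ ν).re ^ 2 + (κ ν).im ^ 2) * (v 0 ^ 2 + v 1 ^ 2) := by
        simp [MC, Matrix.mulVec, dotProduct, Fin.sum_univ_two]
        ring
      rw [h2] at h1
      calc l2 * ((κ ν).re ^ 2 + (κ ν).im ^ 2) * (v 0 ^ 2 + v 1 ^ 2)
          = l2 * (((κ ν).re ^ 2 + (κ ν).im ^ 2) * (v 0 ^ 2 + v 1 ^ 2)) := by ring
        _ ≤ _ := h1
    calc l2 * (v 0 ^ 2 + v 1 ^ 2)
        = ∑ ν, l2 * ((κ ν).re ^ 2 + (κ ν).im ^ 2) * (v 0 ^ 2 + v 1 ^ 2) := by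
          rw [← Finset.sum_mul, ← Finset.mul_sum, hA, mul_one]
      _ ≤ _ := Finset.sum_le_sum fun ν _ => step ν
  have hGpd : G.PosDef := by
    rw [Matrix.posDef_iff_dotProduct_mulVec]
    constructor
    · show Gᴴ = G
      ext i j
      rw [Matrix.conjTranspose_apply, star_trivial]
      exact congrFun (congrFun hGsymm i) j
    · intro x hx
      have hx' : x 0 ≠ 0 ∨ x 1 ≠ 0 := by
        by_contra h
        push_neg at h
        exact hx (funext fun i => by fin_cases i <;> simp [h.1, h.2])
      have hpos : 0 < l2 * (x 0 ^ 2 + x 1 ^ 2) := by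
        apply mul_pos hl2
        rcases hx' with h | h
        · nlinarith [sq_nonneg (x 0), sq_nonneg (x 1), sq_pos_of_ne_zero h]
        · nlinarith [sq_nonneg (x 0), sq_nonneg (x 1), sq_pos_of_ne_zero h]
      have := lt_of_lt_of_le hpos (hGlb x)
      simpa [star_trivial] using this
  have hdet : IsUnit G.det := isUnit_iff_ne_zero.mpr (ne_of_gt hGpd.det_pos)
  have hGGi : G * G⁻¹ = 1 := Matrix.mul_nonsing_inv G hdet
  have hGiG : G⁻¹ * G = 1 := Matrix.nonsing_inv_mul G hdet
  have hGit : (G⁻¹)ᵀ = G⁻¹ := by rw [Matrix.transpose_nonsing_inv, hGsymm]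
  set Q : Matrix (Fin 2) (Fin 2) ℝ := B0 - Bᵀ * G⁻¹ * B with hQdef
  have hQsymm : Qᵀ = Q := by
    rw [hQdef, Matrix.transpose_sub, hB0symm, Matrix.transpose_mul, Matrix.transpose_mul,
      Matrix.transpose_transpose, hGit, Matrix.mul_assoc]
  -- phiHat as a vector
  have hph : ∀ Y : CVec N, vecC (phiHat κ P Y) = G⁻¹ *ᵥ bulA P κ Y := by
    intro Y
    funext i
    fin_cases i <;> simp [phiHat, vecC, hGdef]
  -- the key quadratic form identity
  have quad_reduce : ∀ (G' B' B0' : Matrix (Fin 2) (Fin 2) ℝ), G' * G'⁻¹ = 1 →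
      ∀ x : Fin 2 → ℝ,
      x ⬝ᵥ B0' *ᵥ x - x ⬝ᵥ (B')ᵀ *ᵥ (G'⁻¹ *ᵥ (B' *ᵥ x)) - (G'⁻¹ *ᵥ (B' *ᵥ x)) ⬝ᵥ B' *ᵥ x
        + (G'⁻¹ *ᵥ (B' *ᵥ x)) ⬝ᵥ G' *ᵥ (G'⁻¹ *ᵥ (B' *ᵥ x))
      = x ⬝ᵥ (B0' - (B')ᵀ * G'⁻¹ * B') *ᵥ x := by
    intro G' B' B0' hGGi' x
    have h1 : x ⬝ᵥ (B')ᵀ *ᵥ (G'⁻¹ *ᵥ (B' *ᵥ x)) = (B' *ᵥ x) ⬝ᵥ (G'⁻¹ *ᵥ (B' *ᵥ x)) := by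
      rw [Matrix.dotProduct_mulVec x (B')ᵀ, Matrix.vecMul_transpose]
    have h2 : (G'⁻¹ *ᵥ (B' *ᵥ x)) ⬝ᵥ G' *ᵥ (G'⁻¹ *ᵥ (B' *ᵥ x))
        = (G'⁻¹ *ᵥ (B' *ᵥ x)) ⬝ᵥ (B' *ᵥ x) := by
      rw [Matrix.mulVec_mulVec (B' *ᵥ x) G' G'⁻¹, hGGi', Matrix.one_mulVec]
    have h3 := dotProduct_comm (G'⁻¹ *ᵥ (B' *ᵥ x)) (B' *ᵥ x)
    have h4 : x ⬝ᵥ (B0' - (B')ᵀ * G'⁻¹ * B') *ᵥ x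
        = x ⬝ᵥ B0' *ᵥ x - x ⬝ᵥ (B')ᵀ *ᵥ (G'⁻¹ *ᵥ (B' *ᵥ x)) := by
      rw [Matrix.sub_mulVec, dotProduct_sub]
      congr 2
      rw [← Matrix.mulVec_mulVec x ((B')ᵀ * G'⁻¹) B', ← Matrix.mulVec_mulVec (B' *ᵥ x) (B')ᵀ G'⁻¹]
    rw [h4, h1, h2, h3]
    ring
  have key : ∀ φ : ℂ, rhoD P (φ • κ0) κ = vecC φ ⬝ᵥ Q *ᵥ vecC φ := by
    intro φ
    have hphv : vecC (phiHat κ P (φ • κ0)) = G⁻¹ *ᵥ (B *ᵥ vecC φ) := by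
      rw [hph, bulA_smul, hBdef]
    rw [hrhoD_eq, iprA_sub_sub, iprA_smul_smul, iprA_smul_smul, iprA_smul_smul, iprA_smul_smul,
      hphv, ← diaA_transpose P hPsymm κ κ0, hQdef]
    exact quad_reduce G B B0 hGGi (vecC φ)
  -- the Euclidean lower bound
  have hsumE : ∀ φ ψ : ℂ, (1 - ‖cc‖ ^ 2) * (φ.re ^ 2 + φ.im ^ 2)
      ≤ ∑ ν, ((φ * κ0 ν - ψ * κ ν).re ^ 2 + (φ * κ0 ν - ψ * κ ν).im ^ 2) := by
    intro φ ψ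
    have hid : ∀ ν ∈ Finset.univ, ((φ * κ0 ν - ψ * κ ν).re ^ 2 + (φ * κ0 ν - ψ * κ ν).im ^ 2)
        = (φ.re ^ 2 + φ.im ^ 2) * ((κ0 ν).re ^ 2 + (κ0 ν).im ^ 2)
          + (ψ.re ^ 2 + ψ.im ^ 2) * ((κ ν).re ^ 2 + (κ ν).im ^ 2)
          - 2 * (φ.re * ψ.re + φ.im * ψ.im)
              * ((κ ν).re * (κ0 ν).re + (κ ν).im * (κ0 ν).im)
          + 2 * (φ.im * ψ.re - φ.re * ψ.im)
              * ((κ ν).re * (κ0 ν).im - (κ ν).im * (κ0 ν).re) := by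
      intro ν _
      simp [Complex.sub_re, Complex.sub_im, Complex.mul_re, Complex.mul_im]
      ring
    rw [Finset.sum_congr rfl hid, Finset.sum_add_distrib, Finset.sum_sub_distrib,
      Finset.sum_add_distrib, ← Finset.mul_sum, ← Finset.mul_sum, ← Finset.mul_sum,
      ← Finset.mul_sum, hA, hB, hcre, hcim, habs2]
    nlinarith [sq_nonneg (ψ.re - cc.re * φ.re + cc.im * φ.im),
      sq_nonneg (ψ.im - cc.re * φ.im - cc.im * φ.re)]
  have hlow : ∀ φ : ℂ, (1 - ‖cc‖ ^ 2) * l2 * ‖φ‖ ^ 2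
      ≤ rhoD P (φ • κ0) κ := by
    intro φ
    rw [hrhoD_eq]
    set E : CVec N := φ • κ0 - phiHat κ P (φ • κ0) • κ with hEdef
    have hEν : ∀ ν : Fin N, E ν = φ * κ0 ν - phiHat κ P (φ • κ0) * κ ν := fun ν => rfl
    have step1 : l2 * ∑ ν, ((E ν).re ^ 2 + (E ν).im ^ 2) ≤ iprA P E E := by
      unfold iprA
      rw [Finset.mul_sum]
      refine Finset.sum_le_sum fun ν _ => ?_
      have := hPlb (vecC (E ν))
      simpa [vecC] using this
    have step2 : (1 - ‖cc‖ ^ 2) * (φ.re ^ 2 + φ.im ^ 2)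
        ≤ ∑ ν, ((E ν).re ^ 2 + (E ν).im ^ 2) := by
      have := hsumE φ (phiHat κ P (φ • κ0))
      calc (1 - ‖cc‖ ^ 2) * (φ.re ^ 2 + φ.im ^ 2)
          ≤ ∑ ν, ((φ * κ0 ν - phiHat κ P (φ • κ0) * κ ν).re ^ 2
              + (φ * κ0 ν - phiHat κ P (φ • κ0) * κ ν).im ^ 2) := this
        _ = _ := Finset.sum_congr rfl fun ν _ => by rw [hEν ν]
    have habsφ : ‖φ‖ ^ 2 = φ.re ^ 2 + φ.im ^ 2 := by
      rw [Complex.sq_norm, Complex.normSq_apply]; ring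
    calc (1 - ‖cc‖ ^ 2) * l2 * ‖φ‖ ^ 2
        = l2 * ((1 - ‖cc‖ ^ 2) * (φ.re ^ 2 + φ.im ^ 2)) := by rw [habsφ]; ring
      _ ≤ l2 * ∑ ν, ((E ν).re ^ 2 + (E ν).im ^ 2) :=
          mul_le_mul_of_nonneg_left step2 hl2.le
      _ ≤ iprA P E E := step1
  -- the projective-distance factor
  have hpd2 : pdist κ κ0 ^ 2 = 2 - 2 * ‖cc‖ := by
    rw [pdist_eq κ κ0 hκ hκ0, ← hccdef, Real.sq_sqrt (by linarith)]
  have hfac : pdist κ κ0 ^ 2 - pdist κ κ0 ^ 4 / 4 = 1 - ‖cc‖ ^ 2 := by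
    have h4 : pdist κ κ0 ^ 4 = (pdist κ κ0 ^ 2) ^ 2 := by ring
    rw [h4, hpd2]
    ring
  -- case split on |cc| = 1
  by_cases hc1 : ‖cc‖ = 1
  · -- degenerate case: κ0 is a multiple of κ and rhoD vanishes
    have hκ0κ : κ0 = cc • κ := by
      have hn : ‖κ0 - cc • κ‖ ^ 2 = 0 := by
        rw [norm_sub_sq (𝕜 := ℂ), inner_smul_right, hκ0, norm_smul, hκ]
        have h1 : (inner ℂ κ0 κ : ℂ) = (starRingEnd ℂ) cc := by
          rw [hccdef]
          exact (inner_conj_symm κ0 κ).symm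
        rw [h1]
        simp only [Complex.mul_conj, RCLike.re_to_complex, Complex.ofReal_re,
          Complex.normSq_eq_norm_sq, hc1, mul_one]
        norm_num
      have : ‖κ0 - cc • κ‖ = 0 := by
        have := sq_eq_zero_iff.mp hn
        exact this
      rw [norm_eq_zero, sub_eq_zero] at this
      exact this
    have hrho0 : ∀ χ : ℂ, rhoD P (χ • κ) κ = 0 := by
      intro χ
      have hbul : bulA P κ (χ • κ) = G *ᵥ vecC χ := by rw [bulA_smul, hGdef]
      have hv : vecC (phiHat κ P (χ • κ)) = vecC χ := by
        rw [hph, hbul, Matrix.mulVec_mulVec, hGiG, Matrix.one_mulVec]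
      have hphi : phiHat κ P (χ • κ) = χ := by
        have h0 := congrFun hv 0
        have h1 := congrFun hv 1
        simp [vecC] at h0 h1
        exact Complex.ext h0 h1
      rw [hrhoD_eq, hphi, sub_self]
      have : iprA P (0 : CVec N) (0 : CVec N) = 0 := by
        unfold iprA
        refine Finset.sum_eq_zero fun ν _ => ?_
        have hz : (0 : CVec N) ν = 0 := rfl
        rw [hz]
        simp [vecC, dotProduct, Matrix.mulVec, Fin.sum_univ_two]
      rw [this]
    refine ⟨l2 • 1, ?_, ?_, ?_, ?_⟩
    · show (l2 • (1 : Matrix (Fin 2) (Fin 2) ℝ))ᵀ = l2 • 1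
      rw [Matrix.transpose_smul, Matrix.transpose_one]
    · rw [sub_self]
      rw [Matrix.posSemidef_iff_dotProduct_mulVec]
      constructor
      · show (0 : Matrix (Fin 2) (Fin 2) ℝ)ᴴ = 0
        simp
      · intro x
        simp
    · intro φ
      rw [hfac, hc1]
      have : φ • κ0 = (φ * cc) • κ := by rw [hκ0κ, smul_smul]
      rw [this, hrho0]
      ring
    · intro φ
      rw [hfac, hc1]
      have : φ • κ0 = (φ * cc) • κ := by rw [hκ0κ, smul_smul]
      rw [this, hrho0]
      norm_num
  · -- nondegenerate case
    set D : ℝ := 1 - ‖cc‖ ^ 2 with hDdef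
    have hD : 0 < D := by
      have h1 : ‖cc‖ < 1 := lt_of_le_of_ne habs hc1
      have h0 : 0 ≤ ‖cc‖ := norm_nonneg _
      nlinarith
    have hQlb : ∀ x : Fin 2 → ℝ, D * l2 * (x 0 ^ 2 + x 1 ^ 2) ≤ x ⬝ᵥ Q *ᵥ x := by
      intro x
      set φx : ℂ := (x 0 : ℝ) + (x 1 : ℝ) * Complex.I with hφx
      have hvx : vecC φx = x := by
        funext i
        fin_cases i <;> simp [vecC, hφx]
      have h1 := hlow φx
      rw [key φx, hvx] at h1
      have habsφ : ‖φx‖ ^ 2 = x 0 ^ 2 + x 1 ^ 2 := by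
        rw [Complex.sq_norm, Complex.normSq_apply, hφx]
        simp
        ring
      rw [habsφ] at h1
      exact h1
    refine ⟨D⁻¹ • Q, ?_, ?_, ?_, ?_⟩
    · show (D⁻¹ • Q)ᵀ = D⁻¹ • Q
      rw [Matrix.transpose_smul, hQsymm]
    · rw [Matrix.posSemidef_iff_dotProduct_mulVec]
      constructor
      · show (D⁻¹ • Q - l2 • 1)ᴴ = D⁻¹ • Q - l2 • 1
        ext i j
        rw [Matrix.conjTranspose_apply, star_trivial]
        have : (D⁻¹ • Q - l2 • (1 : Matrix (Fin 2) (Fin 2) ℝ))ᵀ = D⁻¹ • Q - l2 • 1 := by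
          rw [Matrix.transpose_sub, Matrix.transpose_smul, hQsymm, Matrix.transpose_smul,
            Matrix.transpose_one]
        exact congrFun (congrFun this i) j
      · intro x
        have hx : star x = x := funext fun i => star_trivial (x i)
        rw [hx]
        have hcomp : x ⬝ᵥ (D⁻¹ • Q - l2 • (1 : Matrix (Fin 2) (Fin 2) ℝ)) *ᵥ x
            = D⁻¹ * (x ⬝ᵥ Q *ᵥ x) - l2 * (x 0 ^ 2 + x 1 ^ 2) := by
          rw [Matrix.sub_mulVec, dotProduct_sub, Matrix.smul_mulVec, dotProduct_smul,
            Matrix.smul_mulVec, dotProduct_smul, Matrix.one_mulVec]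
          simp only [dotProduct, Fin.sum_univ_two, smul_eq_mul]
          ring
        rw [hcomp]
        have h1 := hQlb x
        have h2 := mul_le_mul_of_nonneg_left h1 (le_of_lt (inv_pos.mpr hD))
        have h3 : D⁻¹ * (D * l2 * (x 0 ^ 2 + x 1 ^ 2)) = l2 * (x 0 ^ 2 + x 1 ^ 2) := by
          field_simp
        rw [h3] at h2
        linarith
    · intro φ
      rw [hfac, key φ, Matrix.smul_mulVec, dotProduct_smul, smul_eq_mul,
        ← mul_assoc, mul_inv_cancel₀ (ne_of_gt hD), one_mul]
    · intro φ
      rw [hfac]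
      exact hlow φ
end
end

section
/- In the centered homoscedastic drift model, the population Fréchet function decomposes as F([κ]) = E[ρ(φκ⁰, [κ])] + E[ρ(ε, [κ])] for every unit vector κ ∈ S_ℂ, where F([κ]) := E[ρ(Y,[κ])] with Y = φκ⁰ + ε. -/
open scoped BigOperators Matrix ComplexOrder
open MeasureTheory Filter Matrix

noncomputable section

section Helpers

def Gres {N : ℕ} (P : Matrix (Fin 2) (Fin 2) ℝ) (κ Y : CVec N) : CVec N :=
  Y - phiHat κ P Y • κ

lemma vecC_add (z w : ℂ) : vecC (z + w) = vecC z + vecC w := by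
  funext i; fin_cases i <;> simp [vecC]

lemma vecC_mul (z w : ℂ) : vecC (z * w) = MC z *ᵥ vecC w := by
  funext i; fin_cases i <;>
    simp [vecC, MC, Matrix.mulVec, dotProduct, Fin.sum_univ_two, Complex.mul_re,
      Complex.mul_im] <;> ring

lemma bulA_add {N : ℕ} (P : Matrix (Fin 2) (Fin 2) ℝ) (κ Y Z : CVec N) :
    bulA P κ (Y + Z) = bulA P κ Y + bulA P κ Z := by
  unfold bulA
  rw [← Finset.sum_add_distrib]
  refine Finset.sum_congr rfl fun ν _ => ?_
  have : (Y + Z) ν = Y ν + Z ν := rfl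
  rw [this, vecC_add, Matrix.mulVec_add]

lemma phiHat_add {N : ℕ} (P : Matrix (Fin 2) (Fin 2) ℝ) (κ Y Z : CVec N) :
    phiHat κ P (Y + Z) = phiHat κ P Y + phiHat κ P Z := by
  unfold phiHat
  rw [bulA_add, Matrix.mulVec_add]
  simp only [Pi.add_apply]
  push_cast
  ring

lemma Gres_add {N : ℕ} (P : Matrix (Fin 2) (Fin 2) ℝ) (κ Y Z : CVec N) :
    Gres P κ (Y + Z) = Gres P κ Y + Gres P κ Z := by
  unfold Gres
  rw [phiHat_add, add_smul]
  abel

def ipEx {N : ℕ} (P : Matrix (Fin 2) (Fin 2) ℝ) (z w : CVec N) : ℝ :=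
  ∑ ν, ∑ i, ∑ j, vecC (z ν) i * (P i j * vecC (w ν) j)

lemma iprA_eq_ipEx {N : ℕ} (P : Matrix (Fin 2) (Fin 2) ℝ) (z w : CVec N) :
    iprA P z w = ipEx P z w := by
  unfold iprA ipEx
  refine Finset.sum_congr rfl fun ν _ => ?_
  simp [dotProduct, Matrix.mulVec, Fin.sum_univ_two]
  ring

lemma ipEx_add_add {N : ℕ} (P : Matrix (Fin 2) (Fin 2) ℝ) (z z' w w' : CVec N) :
    ipEx P (z + z') (w + w') =
      ipEx P z w + ipEx P z' w' + (ipEx P z w' + ipEx P z' w) := by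
  unfold ipEx
  simp only [← Finset.sum_add_distrib]
  refine Finset.sum_congr rfl fun ν _ => Finset.sum_congr rfl fun i _ =>
    Finset.sum_congr rfl fun j _ => ?_
  have hz : (z + z') ν = z ν + z' ν := rfl
  have hw : (w + w') ν = w ν + w' ν := rfl
  rw [hz, hw, vecC_add, vecC_add]
  simp only [Pi.add_apply]
  ring

lemma rhoD_eq_ipEx {N : ℕ} (P : Matrix (Fin 2) (Fin 2) ℝ) (κ Y : CVec N)
    (hP : ∀ v : Fin 2 → ℝ, 0 ≤ v ⬝ᵥ (P *ᵥ v)) :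
    rhoD P Y κ = ipEx P (Gres P κ Y) (Gres P κ Y) := by
  unfold rhoD dMah
  rw [Real.sq_sqrt]
  · rw [iprA_eq_ipEx]; rfl
  · exact Finset.sum_nonneg fun ν _ => hP _

lemma rhoD_decomp {N : ℕ} (P : Matrix (Fin 2) (Fin 2) ℝ) (κ U V : CVec N)
    (hP : ∀ v : Fin 2 → ℝ, 0 ≤ v ⬝ᵥ (P *ᵥ v)) :
    rhoD P (U + V) κ = rhoD P U κ + rhoD P V κ +
      (ipEx P (Gres P κ U) (Gres P κ V) + ipEx P (Gres P κ V) (Gres P κ U)) := by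
  rw [rhoD_eq_ipEx P κ _ hP, rhoD_eq_ipEx P κ U hP, rhoD_eq_ipEx P κ V hP, Gres_add,
    ipEx_add_add]

lemma vecC_sub (z w : ℂ) : vecC (z - w) = vecC z - vecC w := by
  funext i; fin_cases i <;> simp [vecC]

lemma vecC_phiHat {N : ℕ} (P : Matrix (Fin 2) (Fin 2) ℝ) (κ Y : CVec N) :
    vecC (phiHat κ P Y) = (diaA P κ κ)⁻¹ *ᵥ bulA P κ Y := by
  funext i; fin_cases i <;> simp [vecC, phiHat]

lemma vecC_Gres {N : ℕ} (P : Matrix (Fin 2) (Fin 2) ℝ) (κ Y : CVec N) (ν : Fin N) :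
    vecC (Gres P κ Y ν) =
      vecC (Y ν) - MC (κ ν) *ᵥ ((diaA P κ κ)⁻¹ *ᵥ bulA P κ Y) := by
  have h1 : Gres P κ Y ν = Y ν - phiHat κ P Y * κ ν := rfl
  rw [h1, vecC_sub, mul_comm, vecC_mul, vecC_phiHat]

lemma mulVec_sum' {ι : Type*} (s : Finset ι) (M : Matrix (Fin 2) (Fin 2) ℝ)
    (v : ι → Fin 2 → ℝ) : M *ᵥ (∑ a ∈ s, v a) = ∑ a ∈ s, M *ᵥ v a := by
  exact map_sum M.mulVecLin v s

lemma Gres_comp_rep {N : ℕ} (P : Matrix (Fin 2) (Fin 2) ℝ) (κ : CVec N) (ν : Fin N) (i : Fin 2) :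
    ∃ c : Fin N → Fin 2 → ℝ, ∀ Y : CVec N,
      vecC (Gres P κ Y ν) i = ∑ μ, ∑ k, c μ k * vecC (Y μ) k := by
  classical
  refine ⟨fun μ k => (if μ = ν then (if k = i then (1:ℝ) else 0) else 0) -
    (MC (κ ν) *ᵥ ((diaA P κ κ)⁻¹ *ᵥ fun j => ((MC (κ μ))ᵀ * P) j k)) i, fun Y => ?_⟩
  have hb : bulA P κ Y = ∑ μ, ∑ k, vecC (Y μ) k • (fun j => ((MC (κ μ))ᵀ * P) j k) := by
    unfold bulA
    refine Finset.sum_congr rfl fun μ _ => ?_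
    funext j
    simp [Matrix.mulVec, dotProduct, Fin.sum_univ_two, Finset.sum_apply]
    ring
  rw [vecC_Gres, Pi.sub_apply, hb]
  simp only [mulVec_sum', Matrix.mulVec_smul, Finset.sum_apply, Pi.smul_apply, smul_eq_mul]
  simp only [sub_mul, Finset.sum_sub_distrib]
  congr 1
  · simp only [ite_mul, one_mul, zero_mul]
    rw [Finset.sum_comm]
    simp [Finset.sum_ite_eq']
  · refine Finset.sum_congr rfl fun μ _ => Finset.sum_congr rfl fun k _ => mul_comm _ _

lemma Gres_phi_rep {N : ℕ} (P : Matrix (Fin 2) (Fin 2) ℝ) (κ κ0 : CVec N) (ν : Fin N)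
    (i : Fin 2) : ∃ d : Fin 2 → ℝ, ∀ z : ℂ,
      vecC (Gres P κ (z • κ0) ν) i = d 0 * z.re + d 1 * z.im := by
  obtain ⟨c, hc⟩ := Gres_comp_rep P κ ν i
  refine ⟨fun m => ∑ μ, ∑ k, c μ k * MC (κ0 μ) k m, fun z => ?_⟩
  rw [hc]
  have hv : ∀ μ : Fin N, vecC ((z • κ0) μ) = MC (κ0 μ) *ᵥ vecC z := by
    intro μ
    have : (z • κ0) μ = κ0 μ * z := by
      have : (z • κ0) μ = z * κ0 μ := rfl
      rw [this, mul_comm]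
    rw [this, vecC_mul]
  simp only [hv]
  simp only [Finset.sum_mul]
  rw [← Finset.sum_add_distrib]
  refine Finset.sum_congr rfl fun μ _ => ?_
  rw [← Finset.sum_add_distrib]
  refine Finset.sum_congr rfl fun k _ => ?_
  simp [Matrix.mulVec, dotProduct, Fin.sum_univ_two, vecC]
  ring

lemma Pspec_psd (R : Matrix (Fin 2) (Fin 2) ℝ) (l1 l2 : ℝ) (h1 : 0 ≤ l1) (h2 : 0 ≤ l2)
    (v : Fin 2 → ℝ) : 0 ≤ v ⬝ᵥ ((R * Matrix.diagonal ![l1, l2] * Rᵀ) *ᵥ v) := by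
  rw [← Matrix.mulVec_mulVec, ← Matrix.mulVec_mulVec, Matrix.dotProduct_mulVec,
    ← Matrix.mulVec_transpose]
  set u := Rᵀ *ᵥ v
  have : u ⬝ᵥ (Matrix.diagonal ![l1, l2] *ᵥ u) = l1 * u 0 ^ 2 + l2 * u 1 ^ 2 := by
    simp [dotProduct, Matrix.mulVec_diagonal, Fin.sum_univ_two]
    ring
  rw [this]
  positivity

section GaussHelpers
open ProbabilityTheory Real

lemma gauss_sq_int (v : NNReal) : Integrable (fun x : ℝ => x ^ 2) (gaussianReal 0 v) := by
  rcases eq_or_ne v 0 with h | h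
  · subst h; rw [gaussianReal_zero_var]
    refine ⟨(by fun_prop : Measurable fun x : ℝ => x ^ 2).aestronglyMeasurable, ?_⟩
    rw [hasFiniteIntegral_iff_norm, lintegral_dirac' _ (by fun_prop)]
    exact ENNReal.ofReal_lt_top
  · rw [gaussianReal_of_var_ne_zero _ h]
    rw [integrable_withDensity_iff (measurable_gaussianPDF _ _)
      (Filter.Eventually.of_forall fun x => ENNReal.ofReal_lt_top)]
    have hb : 0 < (2 * (v:ℝ))⁻¹ := by positivity
    have H : Integrable (fun x : ℝ => x ^ 2 * rexp (-(2 * (v:ℝ))⁻¹ * x ^ 2)) := by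
      have := integrable_rpow_mul_exp_neg_mul_sq hb (s := ((2:ℕ):ℝ)) (by norm_num)
      simpa [Real.rpow_natCast] using this
    refine (H.const_mul ((√(2 * π * v))⁻¹)).congr (Filter.Eventually.of_forall fun x => ?_)
    simp only [gaussianPDF_def, ENNReal.toReal_ofReal (gaussianPDFReal_nonneg _ _ _)]
    simp only [gaussianPDFReal, sub_zero]
    rw [show -x ^ 2 / (2 * (v:ℝ)) = -(2 * (v:ℝ))⁻¹ * x ^ 2 by ring]
    ring

lemma gauss_mean (v : NNReal) : ∫ x, x ∂(gaussianReal 0 v) = 0 := by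
  have hone : (⟨(-1:ℝ)^2, sq_nonneg _⟩ : NNReal) = 1 := by ext; norm_num
  have hmap : Measure.map (fun x : ℝ => (-1 : ℝ) * x) (gaussianReal 0 v) = gaussianReal 0 v := by
    rw [gaussianReal_map_const_mul]; congr 1
    · simp
    · ext; simp
  have h1 : ∫ x, x ∂(gaussianReal 0 v) = ∫ x, (-1 : ℝ) * x ∂(gaussianReal 0 v) := by
    conv_lhs => rw [← hmap]
    exact integral_map (f := fun x : ℝ => x) (by fun_prop) aestronglyMeasurable_id
  have h2 : ∫ x, (-1:ℝ) * x ∂(gaussianReal 0 v) = - ∫ x, x ∂(gaussianReal 0 v) := by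
    simp_rw [neg_one_mul]; exact integral_neg _
  linarith

lemma gauss_id_int (v : NNReal) : Integrable (fun x : ℝ => x) (gaussianReal 0 v) := by
  refine Integrable.mono' ((integrable_const 1).add (gauss_sq_int v))
    measurable_id.aestronglyMeasurable (Filter.Eventually.of_forall fun x => ?_)
  simp only [Pi.add_apply]
  rw [Real.norm_eq_abs]
  nlinarith [abs_nonneg x, sq_abs x, sq_nonneg (|x| - 1)]

end GaussHelpers

end Helpers

/-- in the centered homoscedastic drift model `Y = φκ⁰ + ε`, the population
Fréchet function decomposes as `F([κ]) = E[ρ(φκ⁰,[κ])] + E[ρ(ε,[κ])]`. -/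
theorem frechet_function_decomposition {N : ℕ}
    {Ω : Type*} [MeasurableSpace Ω] (Pm : Measure Ω) [IsProbabilityMeasure Pm]
    (Sig P R : Matrix (Fin 2) (Fin 2) ℝ) (l1 l2 : ℝ)
    (hSig : Sig.PosDef) (hP : P = Sig⁻¹)
    (hR : R * Rᵀ = 1) (hPspec : P = R * Matrix.diagonal ![l1, l2] * Rᵀ)
    (hl2 : 0 < l2) (hl12 : l2 < l1)
    -- the true spectrum
    (κ0 : CVec N) (hκ0 : ‖κ0‖ = 1)
    -- the random drift coefficient φ with 0 < E[|φ|²] = c_φ < ∞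
    (φ : Ω → ℂ) (hφmeas : Measurable φ) (cφ : ℝ)
    (hφint : Integrable (fun ω => ‖φ ω‖ ^ 2) Pm)
    (hcφ : ∫ ω, ‖φ ω‖ ^ 2 ∂Pm = cφ) (hcφpos : 0 < cφ)
    -- the noise ε, with i.i.d. centered bivariate Gaussian components of covariance Σ
    (ε : Ω → CVec N)
    (hεmeas : ∀ ν : Fin N, Measurable fun ω => vecC (ε ω ν))
    (hεindep : ProbabilityTheory.iIndepFun
      (fun ν ω => vecC (ε ω ν)) Pm)
    (hεgauss : ∀ (ν : Fin N) (u : Fin 2 → ℝ),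
      Measure.map (fun ω => u ⬝ᵥ vecC (ε ω ν)) Pm =
        ProbabilityTheory.gaussianReal 0 (u ⬝ᵥ Sig *ᵥ u).toNNReal)
    -- φ and ε are independent
    (hφε : ProbabilityTheory.IndepFun φ (fun ω => (fun ν => ε ω ν : Fin N → ℂ)) Pm)
    (κ : CVec N) (hκ : ‖κ‖ = 1) :
    ∫ ω, rhoD P (φ ω • κ0 + ε ω) κ ∂Pm =
      (∫ ω, rhoD P (φ ω • κ0) κ ∂Pm) + ∫ ω, rhoD P (ε ω) κ ∂Pm := by
  classical
  have hPSD : ∀ v : Fin 2 → ℝ, 0 ≤ v ⬝ᵥ (P *ᵥ v) := by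
    intro v; rw [hPspec]
    exact Pspec_psd R l1 l2 (le_of_lt (hl2.trans hl12)) hl2.le v
  choose c hc using fun (ν : Fin N) (i : Fin 2) => Gres_comp_rep P κ ν i
  choose d hd using fun (ν : Fin N) (i : Fin 2) => Gres_phi_rep P κ κ0 ν i
  set f : Fin N → Fin 2 → Ω → ℝ :=
    fun ν i ω => d ν i 0 * (φ ω).re + d ν i 1 * (φ ω).im with hf
  set g : Fin N → Fin 2 → Ω → ℝ :=
    fun ν i ω => ∑ μ, ∑ k, c ν i μ k * vecC (ε ω μ) k with hg
  -- measurability of components of ε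
  have hXmeas : ∀ (μ : Fin N) (k : Fin 2), Measurable fun ω => vecC (ε ω μ) k :=
    fun μ k => (measurable_pi_apply k).comp (hεmeas μ)
  -- law of the components
  have hXlaw : ∀ (μ : Fin N) (k : Fin 2), Measure.map (fun ω => vecC (ε ω μ) k) Pm =
      ProbabilityTheory.gaussianReal 0
        ((Pi.single k 1 ⬝ᵥ Sig *ᵥ Pi.single k 1).toNNReal) := by
    intro μ k
    have h := hεgauss μ (Pi.single k 1)
    have he : (fun ω => Pi.single k (1:ℝ) ⬝ᵥ vecC (ε ω μ)) = fun ω => vecC (ε ω μ) k := by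
      funext ω
      simp [single_dotProduct]
    rwa [he] at h
  have hXsq : ∀ (μ : Fin N) (k : Fin 2), Integrable (fun ω => vecC (ε ω μ) k ^ 2) Pm := by
    intro μ k
    have h := gauss_sq_int ((Pi.single k 1 ⬝ᵥ Sig *ᵥ Pi.single k 1).toNNReal)
    rw [← hXlaw μ k] at h
    exact (integrable_map_measure (by fun_prop) (hXmeas μ k).aemeasurable).mp h
  have hXint : ∀ (μ : Fin N) (k : Fin 2), Integrable (fun ω => vecC (ε ω μ) k) Pm := by
    intro μ k
    have h := gauss_id_int ((Pi.single k 1 ⬝ᵥ Sig *ᵥ Pi.single k 1).toNNReal)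
    rw [← hXlaw μ k] at h
    exact (integrable_map_measure aestronglyMeasurable_id (hXmeas μ k).aemeasurable).mp h
  have hXmean : ∀ (μ : Fin N) (k : Fin 2), ∫ ω, vecC (ε ω μ) k ∂Pm = 0 := by
    intro μ k
    have h := integral_map (μ := Pm) (φ := fun ω => vecC (ε ω μ) k) (f := fun x : ℝ => x)
      (hXmeas μ k).aemeasurable aestronglyMeasurable_id
    rw [hXlaw μ k] at h
    rw [← h, gauss_mean]
  have hXmem : ∀ (μ : Fin N) (k : Fin 2), MemLp (fun ω => vecC (ε ω μ) k) 2 Pm :=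
    fun μ k => (memLp_two_iff_integrable_sq (hXmeas μ k).aestronglyMeasurable).mpr (hXsq μ k)
  -- f properties
  have hfmeas : ∀ ν i, Measurable (f ν i) := by
    intro ν i; simp only [hf]; fun_prop
  have hfbound : ∀ ν i ω, |f ν i ω| ≤ (|d ν i 0| + |d ν i 1|) * ‖φ ω‖ := by
    intro ν i ω
    simp only [hf]
    calc |d ν i 0 * (φ ω).re + d ν i 1 * (φ ω).im|
        ≤ |d ν i 0 * (φ ω).re| + |d ν i 1 * (φ ω).im| := abs_add_le _ _
      _ = |d ν i 0| * |(φ ω).re| + |d ν i 1| * |(φ ω).im| := by rw [abs_mul, abs_mul]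
      _ ≤ |d ν i 0| * ‖φ ω‖ + |d ν i 1| * ‖φ ω‖ := by
          gcongr
          · exact Complex.abs_re_le_norm _
          · exact Complex.abs_im_le_norm _
      _ = (|d ν i 0| + |d ν i 1|) * ‖φ ω‖ := by ring
  have hfint : ∀ ν i, Integrable (f ν i) Pm := by
    intro ν i
    refine Integrable.mono' (((integrable_const (1:ℝ)).add hφint).const_mul
      (|d ν i 0| + |d ν i 1|)) (hfmeas ν i).aestronglyMeasurable
      (Filter.Eventually.of_forall fun ω => ?_)
    rw [Real.norm_eq_abs]
    refine (hfbound ν i ω).trans ?_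
    have h1 : ‖φ ω‖ ≤ 1 + ‖φ ω‖ ^ 2 := by
      nlinarith [norm_nonneg (φ ω), sq_nonneg (‖φ ω‖ - 1)]
    have h2 : (0:ℝ) ≤ |d ν i 0| + |d ν i 1| := by positivity
    simpa [Pi.add_apply, mul_add] using mul_le_mul_of_nonneg_left h1 h2
  -- g properties
  have hgmeas : ∀ ν i, Measurable (g ν i) := by
    intro ν i; simp only [hg]
    exact Finset.measurable_sum _ fun μ _ =>
      Finset.measurable_sum _ fun k _ => (hXmeas μ k).const_mul _
  have hgint : ∀ ν i, Integrable (g ν i) Pm := by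
    intro ν i; simp only [hg]
    exact integrable_finset_sum _ fun μ _ =>
      integrable_finset_sum _ fun k _ => (hXint μ k).const_mul _
  have hgmem : ∀ ν i, MemLp (g ν i) 2 Pm := by
    intro ν i; simp only [hg]
    refine memLp_finset_sum _ fun μ _ => memLp_finset_sum _ fun k _ => ?_
    exact (hXmem μ k).const_mul _
  have hgmean : ∀ ν i, ∫ ω, g ν i ω ∂Pm = 0 := by
    intro ν i; simp only [hg]
    rw [integral_finset_sum _ fun μ _ =>
      integrable_finset_sum _ fun k _ => (hXint μ k).const_mul _]
    refine Finset.sum_eq_zero fun μ _ => ?_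
    rw [integral_finset_sum _ fun k _ => (hXint μ k).const_mul _]
    refine Finset.sum_eq_zero fun k _ => ?_
    rw [integral_const_mul, hXmean μ k, mul_zero]
  -- product of two L2 functions is integrable
  have hmulL2 : ∀ (u w : Ω → ℝ), MemLp u 2 Pm → MemLp w 2 Pm →
      Integrable (fun ω => u ω * w ω) Pm := by
    intro u w hu hw
    refine Integrable.mono' (hu.integrable_sq.add hw.integrable_sq)
      (hu.aestronglyMeasurable.mul hw.aestronglyMeasurable)
      (Filter.Eventually.of_forall fun ω => ?_)
    rw [Real.norm_eq_abs, abs_mul, Pi.add_apply]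
    nlinarith [sq_nonneg (|u ω| - |w ω|), sq_abs (u ω), sq_abs (w ω),
      abs_nonneg (u ω), abs_nonneg (w ω)]
  -- independence of f- and g-components
  have hvecm : ∀ (μ : Fin N) (k : Fin 2), Measurable fun e : Fin N → ℂ => vecC (e μ) k := by
    intro μ k
    fin_cases k
    · simp [vecC]; exact Complex.measurable_re.comp (measurable_pi_apply μ)
    · simp [vecC]; exact Complex.measurable_im.comp (measurable_pi_apply μ)
  have hindep : ∀ ν i ν' j (a : ℝ), ProbabilityTheory.IndepFun (f ν i)
      (fun ω => a * g ν' j ω) Pm := by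
    intro ν i ν' j a
    have hF : Measurable fun z : ℂ => d ν i 0 * z.re + d ν i 1 * z.im := by fun_prop
    have hG : Measurable fun e : Fin N → ℂ => a * ∑ μ, ∑ k, c ν' j μ k * vecC (e μ) k := by
      refine Measurable.const_mul ?_ a
      exact Finset.measurable_sum _ fun μ _ =>
        Finset.measurable_sum _ fun k _ => (hvecm μ k).const_mul _
    have h := hφε.comp hF hG
    simp only [hf, hg]
    exact h
  -- the pointwise decomposition
  have hAeq : ∀ ω, rhoD P (φ ω • κ0) κ =
      ∑ ν, ∑ i, ∑ j, f ν i ω * (P i j * f ν j ω) := by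
    intro ω
    rw [rhoD_eq_ipEx P κ _ hPSD]
    simp only [ipEx, hf]
    exact Finset.sum_congr rfl fun ν _ => Finset.sum_congr rfl fun i _ =>
      Finset.sum_congr rfl fun j _ => by rw [hd ν i (φ ω), hd ν j (φ ω)]
  have hBeq : ∀ ω, rhoD P (ε ω) κ =
      ∑ ν, ∑ i, ∑ j, g ν i ω * (P i j * g ν j ω) := by
    intro ω
    rw [rhoD_eq_ipEx P κ _ hPSD]
    simp only [ipEx, hg]
    exact Finset.sum_congr rfl fun ν _ => Finset.sum_congr rfl fun i _ =>
      Finset.sum_congr rfl fun j _ => by rw [hc ν i (ε ω), hc ν j (ε ω)]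
  have hpt : ∀ ω, rhoD P (φ ω • κ0 + ε ω) κ =
      rhoD P (φ ω • κ0) κ + rhoD P (ε ω) κ +
      ((∑ ν, ∑ i, ∑ j, f ν i ω * (P i j * g ν j ω)) +
        (∑ ν, ∑ i, ∑ j, g ν i ω * (P i j * f ν j ω))) := by
    intro ω
    rw [rhoD_decomp P κ (φ ω • κ0) (ε ω) hPSD]
    congr 2
    · simp only [ipEx, hf, hg]
      exact Finset.sum_congr rfl fun ν _ => Finset.sum_congr rfl fun i _ =>
        Finset.sum_congr rfl fun j _ => by rw [hd ν i (φ ω), hc ν j (ε ω)]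
    · simp only [ipEx, hf, hg]
      exact Finset.sum_congr rfl fun ν _ => Finset.sum_congr rfl fun i _ =>
        Finset.sum_congr rfl fun j _ => by rw [hc ν i (ε ω), hd ν j (φ ω)]
  -- integrability of all pieces
  have hintA : Integrable (fun ω => rhoD P (φ ω • κ0) κ) Pm := by
    simp only [hAeq]
    refine integrable_finset_sum _ fun ν _ => integrable_finset_sum _ fun i _ =>
      integrable_finset_sum _ fun j _ => ?_
    refine Integrable.mono' (hφint.const_mul
      (((|d ν i 0| + |d ν i 1|)) * (|P i j| * (|d ν j 0| + |d ν j 1|))))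
      (((hfmeas ν i).mul ((hfmeas ν j).const_mul _)).aestronglyMeasurable)
      (Filter.Eventually.of_forall fun ω => ?_)
    rw [Real.norm_eq_abs, abs_mul, abs_mul]
    calc |f ν i ω| * (|P i j| * |f ν j ω|)
        ≤ ((|d ν i 0| + |d ν i 1|) * ‖φ ω‖) *
            (|P i j| * ((|d ν j 0| + |d ν j 1|) * ‖φ ω‖)) := by
          have ha : (0:ℝ) ≤ ‖φ ω‖ := norm_nonneg _
          have hK : (0:ℝ) ≤ (|d ν i 0| + |d ν i 1|) * ‖φ ω‖ := by positivity
          exact mul_le_mul (hfbound ν i ω)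
            (mul_le_mul_of_nonneg_left (hfbound ν j ω) (abs_nonneg _))
            (by positivity) hK
      _ = (|d ν i 0| + |d ν i 1|) * (|P i j| * (|d ν j 0| + |d ν j 1|)) *
            ‖φ ω‖ ^ 2 := by ring
  have hintB : Integrable (fun ω => rhoD P (ε ω) κ) Pm := by
    simp only [hBeq]
    refine integrable_finset_sum _ fun ν _ => integrable_finset_sum _ fun i _ =>
      integrable_finset_sum _ fun j _ => ?_
    have h : (fun ω => g ν i ω * (P i j * g ν j ω)) =
        fun ω => P i j * (g ν i ω * g ν j ω) := by funext ω; ring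
    rw [h]
    exact (hmulL2 _ _ (hgmem ν i) (hgmem ν j)).const_mul _
  have hintC1' : ∀ ν i ν' j (a : ℝ), Integrable (fun ω => f ν i ω * (a * g ν' j ω)) Pm :=
    fun ν i ν' j a => (hindep ν i ν' j a).integrable_mul (hfint ν i)
      ((hgint ν' j).const_mul _)
  have hintC1 : ∀ ν i j, Integrable (fun ω => f ν i ω * (P i j * g ν j ω)) Pm :=
    fun ν i j => hintC1' ν i ν j (P i j)
  have hintC2 : ∀ ν i j, Integrable (fun ω => g ν i ω * (P i j * f ν j ω)) Pm := by
    intro ν i j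
    have h : (fun ω => g ν i ω * (P i j * f ν j ω)) =
        fun ω => f ν j ω * (P i j * g ν i ω) := by funext ω; ring
    rw [h]
    exact hintC1' ν j ν i (P i j)
  have hC1' : ∀ ν i ν' j (a : ℝ), ∫ ω, f ν i ω * (a * g ν' j ω) ∂Pm = 0 := by
    intro ν i ν' j a
    have h := (hindep ν i ν' j a).integral_mul_eq_mul_integral (hfmeas ν i).aestronglyMeasurable
      (((hgmeas ν' j).const_mul _).aestronglyMeasurable)
    have h2 : ∫ ω, a * g ν' j ω ∂Pm = 0 := by
      rw [integral_const_mul, hgmean ν' j, mul_zero]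
    calc ∫ ω, f ν i ω * (a * g ν' j ω) ∂Pm
        = (∫ ω, f ν i ω ∂Pm) * ∫ ω, a * g ν' j ω ∂Pm := h
      _ = 0 := by rw [h2, mul_zero]
  have hC1 : ∀ ν i j, ∫ ω, f ν i ω * (P i j * g ν j ω) ∂Pm = 0 :=
    fun ν i j => hC1' ν i ν j (P i j)
  have hC2 : ∀ ν i j, ∫ ω, g ν i ω * (P i j * f ν j ω) ∂Pm = 0 := by
    intro ν i j
    have h : (fun ω => g ν i ω * (P i j * f ν j ω)) =
        fun ω => f ν j ω * (P i j * g ν i ω) := by funext ω; ring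
    rw [h]
    exact hC1' ν j ν i (P i j)
  -- summed cross terms
  have hintS1 : Integrable (fun ω => ∑ ν, ∑ i, ∑ j, f ν i ω * (P i j * g ν j ω)) Pm :=
    integrable_finset_sum _ fun ν _ => integrable_finset_sum _ fun i _ =>
      integrable_finset_sum _ fun j _ => hintC1 ν i j
  have hintS2 : Integrable (fun ω => ∑ ν, ∑ i, ∑ j, g ν i ω * (P i j * f ν j ω)) Pm :=
    integrable_finset_sum _ fun ν _ => integrable_finset_sum _ fun i _ =>
      integrable_finset_sum _ fun j _ => hintC2 ν i j
  have hS1 : ∫ ω, (∑ ν, ∑ i, ∑ j, f ν i ω * (P i j * g ν j ω)) ∂Pm = 0 := by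
    rw [integral_finset_sum _ fun ν _ => integrable_finset_sum _ fun i _ =>
      integrable_finset_sum _ fun j _ => hintC1 ν i j]
    refine Finset.sum_eq_zero fun ν _ => ?_
    rw [integral_finset_sum _ fun i _ => integrable_finset_sum _ fun j _ => hintC1 ν i j]
    refine Finset.sum_eq_zero fun i _ => ?_
    rw [integral_finset_sum _ fun j _ => hintC1 ν i j]
    exact Finset.sum_eq_zero fun j _ => hC1 ν i j
  have hS2 : ∫ ω, (∑ ν, ∑ i, ∑ j, g ν i ω * (P i j * f ν j ω)) ∂Pm = 0 := by
    rw [integral_finset_sum _ fun ν _ => integrable_finset_sum _ fun i _ =>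
      integrable_finset_sum _ fun j _ => hintC2 ν i j]
    refine Finset.sum_eq_zero fun ν _ => ?_
    rw [integral_finset_sum _ fun i _ => integrable_finset_sum _ fun j _ => hintC2 ν i j]
    refine Finset.sum_eq_zero fun i _ => ?_
    rw [integral_finset_sum _ fun j _ => hintC2 ν i j]
    exact Finset.sum_eq_zero fun j _ => hC2 ν i j
  -- final assembly
  have h12 : Integrable (fun ω => rhoD P (φ ω • κ0) κ + rhoD P (ε ω) κ) Pm :=
    hintA.add hintB
  have hS12 : Integrable (fun ω =>
      (∑ ν, ∑ i, ∑ j, f ν i ω * (P i j * g ν j ω)) +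
      (∑ ν, ∑ i, ∑ j, g ν i ω * (P i j * f ν j ω))) Pm := hintS1.add hintS2
  simp_rw [hpt]
  rw [integral_add h12 hS12, integral_add hintA hintB, integral_add hintS1 hintS2, hS1, hS2]
  ring
end
end
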